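/- Let q, z ∈ ℂ with |q| < 1, and let r, s ∈ ℂ with r² = q and s² = z. Then the determinants of Lehmer's tridiagonal matrices M(n) (with M_{i,i} = 1, M_{i,i+1} = s·r^(i-1), M_{i+1,i} = s·r^(i-1), all other entries zero) converge as n → ∞, and lim_{n→∞} det M(n) = Σ_{k≥0} (-1)^k · q^(k(k-1)) · z^k / (q;q)_k, where (q;q)_k = (1-q)(1-q²)⋯(1-q^k); in particular, this series converges. -/

import Mathlib

/-!
Expanding `det M(n)` along the first row gives the recurrence
`det M_{n+2}(s) = det M_{n+1}(s r) - s² det M_n(s r²)`, where `M_n(s)` has off-diagonal entries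
`s r^i`. By the `q`-Pascal rule this recurrence is also satisfied by
`∑_{k + m = n} (-1)^k q^{k(k-1)} z^k [m choose k]_q`, so the two agree. As `m → ∞` the Gaussian
binomial `[m choose k]_q` tends to `1 / (q;q)_k`, and it is bounded by `(2 / (1 - |q|))^k` uniformly
in `m`. The terms are therefore dominated by the summable `|q|^{k(k-1)} (2|z| / (1 - |q|))^k`, and
dominated convergence for series (Tannery's theorem) gives the limit.
-/

open Filter

/-- Lehmer's tridiagonal matrix `M(n)` (1-based: `M_{i,i} = 1`,
`M_{i,i+1} = s·r^(i-1)`, `M_{i+1,i} = s·r^(i-1)`), with 0-based `Fin n` indices. -/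
def lehmerM (r s : ℂ) (n : ℕ) : Matrix (Fin n) (Fin n) ℂ :=
  Matrix.of fun a b =>
    if (a : ℕ) = (b : ℕ) then 1
    else if (a : ℕ) + 1 = (b : ℕ) then s * r ^ (a : ℕ)
    else if (b : ℕ) + 1 = (a : ℕ) then s * r ^ (b : ℕ)
    else 0

/-- The `q`-Pochhammer symbol `(q;q)_k = ∏_{i=1}^{k} (1 - q^i)`. -/
def qPochhammer (q : ℂ) (k : ℕ) : ℂ :=
  ∏ i ∈ Finset.range k, (1 - q ^ (i + 1))

open Finset Topology

section Tridiagonal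

variable {R : Type*}

def tridiagonal [Zero R] (d u l : ℕ → R) (n : ℕ) : Matrix (Fin n) (Fin n) R :=
  Matrix.of fun a b =>
    if (a : ℕ) = (b : ℕ) then d a
    else if (a : ℕ) + 1 = (b : ℕ) then u a
    else if (b : ℕ) + 1 = (a : ℕ) then l b
    else 0

theorem tridiagonal_submatrix_succ [Zero R] (d u l : ℕ → R) (n : ℕ) :
    (tridiagonal d u l (n + 1)).submatrix Fin.succ Fin.succ =
      tridiagonal (fun i => d (i + 1)) (fun i => u (i + 1)) (fun i => l (i + 1)) n := by
  ext a b
  simp [tridiagonal]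

theorem det_tridiagonal_add_two [CommRing R] (d u l : ℕ → R) (n : ℕ) :
    (tridiagonal d u l (n + 2)).det =
      d 0 * (tridiagonal (fun i => d (i + 1)) (fun i => u (i + 1)) (fun i => l (i + 1)) (n + 1)).det
        - u 0 * l 0 *
          (tridiagonal (fun i => d (i + 2)) (fun i => u (i + 2)) (fun i => l (i + 2)) n).det := by
  set A := tridiagonal d u l (n + 2)
  -- Only `A 0 0` and `A 0 1` survive in the first-row expansion, and the first column of the
  -- `(0, 1)` minor is `(l 0, 0, …, 0)`.
  have hminor : (A.submatrix Fin.succ (Fin.succ 0).succAbove).det =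
      l 0 * (tridiagonal (fun i => d (i + 2)) (fun i => u (i + 2)) (fun i => l (i + 2)) n).det := by
    rw [Matrix.det_succ_column_zero, Fin.sum_univ_succ]
    have hcol : ∀ i : Fin n, A i.succ.succ ((Fin.succ 0).succAbove 0) = 0 := fun i => by
      simp [A, tridiagonal, Fin.succAbove]
    have hsub : (A.submatrix Fin.succ (Fin.succ 0).succAbove).submatrix (Fin.succAbove 0) Fin.succ =
        tridiagonal (fun i => d (i + 2)) (fun i => u (i + 2)) (fun i => l (i + 2)) n := by
      ext a b
      simp [A, tridiagonal, Fin.succAbove, Fin.lt_def]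
    simp only [hsub, Matrix.submatrix_apply, hcol, mul_zero, zero_mul, sum_const_zero, add_zero]
    simp [A, tridiagonal, Fin.succAbove]
  have hrow : ∀ j : Fin n, A 0 j.succ.succ = 0 := fun j => by simp [A, tridiagonal]
  rw [Matrix.det_succ_row_zero, Fin.sum_univ_succ, Fin.sum_univ_succ, Fin.succAbove_zero,
    tridiagonal_submatrix_succ, hminor]
  simp only [Fin.val_zero, Fin.val_succ, Fin.succ_zero_eq_one, pow_zero, one_mul,
    hrow, mul_zero, zero_mul, sum_const_zero, add_zero]
  simp only [A, tridiagonal, Matrix.of_apply, Fin.val_zero, Fin.val_one, if_true, zero_ne_one,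
    if_false, zero_add]
  ring

end Tridiagonal

theorem add_one_mul_add_one_sub_one (k : ℕ) : (k + 1) * (k + 1 - 1) = k * (k - 1) + 2 * k := by
  cases k with
  | zero => rfl
  | succ k => simp only [Nat.add_sub_cancel]; ring

theorem lehmerM_eq_tridiagonal (r s : ℂ) (n : ℕ) :
    lehmerM r s n = tridiagonal (fun _ => 1) (fun i => s * r ^ i) (fun i => s * r ^ i) n :=
  rfl

theorem det_lehmerM_add_two (r s : ℂ) (n : ℕ) :
    (lehmerM r s (n + 2)).det =
      (lehmerM r (s * r) (n + 1)).det - s ^ 2 * (lehmerM r (s * r ^ 2) n).det := by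
  have h₁ : (fun i => s * r ^ (i + 1)) = fun i => s * r * r ^ i := by ext; ring
  have h₂ : (fun i => s * r ^ (i + 2)) = fun i => s * r ^ 2 * r ^ i := by ext; ring
  simp only [lehmerM_eq_tridiagonal, det_tridiagonal_add_two, h₁, h₂]
  ring

def gaussBinom {R : Type*} [Semiring R] (q : R) : ℕ → ℕ → R
  | _, 0 => 1
  | 0, _ + 1 => 0
  | m + 1, k + 1 => q ^ (k + 1) * gaussBinom q m (k + 1) + gaussBinom q m k

theorem gaussBinom_eq_zero_of_lt {R : Type*} [Semiring R] (q : R) {m k : ℕ} (h : m < k) :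
    gaussBinom q m k = 0 := by
  induction m generalizing k with
  | zero => obtain ⟨k, rfl⟩ := Nat.exists_eq_add_one_of_ne_zero h.ne'; rfl
  | succ m ih =>
    obtain ⟨k, rfl⟩ := Nat.exists_eq_add_one_of_ne_zero (Nat.ne_zero_of_lt h)
    simp [gaussBinom, ih (by omega : m < k + 1), ih (by omega : m < k)]

theorem det_lehmerM_eq_sum_antidiagonal (r s : ℂ) (n : ℕ) :
    (lehmerM r s n).det = ∑ p ∈ antidiagonal n,
      (-1) ^ p.1 * (r ^ 2) ^ (p.1 * (p.1 - 1)) * (s ^ 2) ^ p.1 * gaussBinom (r ^ 2) p.2 p.1 := by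
  induction n using Nat.strong_induction_on generalizing s with
  | _ n ih =>
  match n with
  | 0 => simp [gaussBinom]
  | 1 => simp [Nat.sum_antidiagonal_succ, gaussBinom, lehmerM]
  | n + 2 =>
    have pascal (k m : ℕ) :
        (-1) ^ (k + 1) * (r ^ 2) ^ ((k + 1) * (k + 1 - 1)) * (s ^ 2) ^ (k + 1) *
          gaussBinom (r ^ 2) (m + 1) (k + 1) =
        (-1) ^ (k + 1) * (r ^ 2) ^ ((k + 1) * (k + 1 - 1)) * ((s * r) ^ 2) ^ (k + 1) *
          gaussBinom (r ^ 2) m (k + 1) -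
        s ^ 2 * ((-1) ^ k * (r ^ 2) ^ (k * (k - 1)) * ((s * r ^ 2) ^ 2) ^ k *
          gaussBinom (r ^ 2) m k) := by
      rw [gaussBinom, add_one_mul_add_one_sub_one, pow_add]
      ring
    rw [det_lehmerM_add_two, ih (n + 1) (by omega), ih n (by omega)]
    conv_lhs => rw [Nat.sum_antidiagonal_succ]
    conv_rhs => rw [Nat.sum_antidiagonal_succ, Nat.sum_antidiagonal_succ']
    simp only [pascal, sum_sub_distrib, mul_sum]
    simp only [pow_zero, zero_tsub, mul_zero, mul_one, gaussBinom, add_tsub_cancel_right, zero_add]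
    ring

theorem gaussBinom_mul_qPochhammer (q : ℂ) (m k : ℕ) :
    gaussBinom q m k * qPochhammer q k = ∏ i ∈ range k, (1 - q ^ (m - i)) := by
  induction m generalizing k with
  | zero =>
    cases k with
    | zero => simp [gaussBinom, qPochhammer]
    | succ k => simp [gaussBinom]
  | succ m ih =>
    cases k with
    | zero => simp [gaussBinom, qPochhammer]
    | succ k =>
      have hpoch : qPochhammer q (k + 1) = qPochhammer q k * (1 - q ^ (k + 1)) :=
        prod_range_succ _ _
      rw [gaussBinom, add_mul, mul_assoc, ih, hpoch, ← mul_assoc, ih, prod_range_succ,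
        prod_range_succ']
      simp only [Nat.add_sub_add_right, Nat.sub_zero]
      rcases le_or_gt k m with hkm | hmk
      · rw [show m + 1 = (k + 1) + (m - k) by omega, pow_add]
        ring
      · -- for `m < k` the factor `i = m` is `1 - q ^ 0 = 0`
        rw [prod_eq_zero (mem_range.2 hmk) (by simp)]
        ring

theorem pow_le_norm_qPochhammer {q : ℂ} (hq : ‖q‖ ≤ 1) (k : ℕ) :
    (1 - ‖q‖) ^ k ≤ ‖qPochhammer q k‖ := by
  have hfactor (i : ℕ) : 1 - ‖q‖ ≤ ‖1 - q ^ (i + 1)‖ :=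
    calc 1 - ‖q‖ ≤ 1 - ‖q ^ (i + 1)‖ := by
          rw [norm_pow]; linarith [pow_le_of_le_one (norm_nonneg q) hq (n := i + 1) (by omega)]
      _ ≤ ‖1 - q ^ (i + 1)‖ := by simpa using norm_sub_norm_le (1 : ℂ) (q ^ (i + 1))
  calc (1 - ‖q‖) ^ k = ∏ _i ∈ range k, (1 - ‖q‖) := by simp
    _ ≤ ∏ i ∈ range k, ‖1 - q ^ (i + 1)‖ :=
      prod_le_prod (fun _ _ => by linarith) fun i _ => hfactor i
    _ = ‖qPochhammer q k‖ := by rw [qPochhammer, norm_prod]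

theorem qPochhammer_ne_zero {q : ℂ} (hq : ‖q‖ < 1) (k : ℕ) : qPochhammer q k ≠ 0 :=
  norm_pos_iff.1 <| (pow_pos (by linarith) k).trans_le (pow_le_norm_qPochhammer hq.le k)

theorem gaussBinom_eq_prod_div {q : ℂ} (hq : ‖q‖ < 1) (m k : ℕ) :
    gaussBinom q m k = (∏ i ∈ range k, (1 - q ^ (m - i))) / qPochhammer q k := by
  rw [← gaussBinom_mul_qPochhammer, mul_div_cancel_right₀ _ (qPochhammer_ne_zero hq k)]

theorem tendsto_gaussBinom_atTop {q : ℂ} (hq : ‖q‖ < 1) (k : ℕ) :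
    Tendsto (fun m => gaussBinom q m k) atTop (𝓝 (qPochhammer q k)⁻¹) := by
  have hfactor (i : ℕ) : Tendsto (fun m => 1 - q ^ (m - i)) atTop (𝓝 1) := by
    simpa using tendsto_const_nhds.sub
      ((tendsto_pow_atTop_nhds_zero_of_norm_lt_one hq).comp (tendsto_sub_atTop_nat i))
  simpa [gaussBinom_eq_prod_div hq, div_eq_mul_inv] using
    (tendsto_finsetProd (range k) fun i _ => hfactor i).mul_const (qPochhammer q k)⁻¹

theorem norm_gaussBinom_le {q : ℂ} (hq : ‖q‖ < 1) (m k : ℕ) :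
    ‖gaussBinom q m k‖ ≤ (2 / (1 - ‖q‖)) ^ k := by
  have hfactor (i : ℕ) : ‖1 - q ^ (m - i)‖ ≤ 2 :=
    calc ‖1 - q ^ (m - i)‖ ≤ ‖(1 : ℂ)‖ + ‖q ^ (m - i)‖ := norm_sub_le _ _
      _ ≤ 2 := by rw [norm_one, norm_pow]; linarith [pow_le_one₀ (norm_nonneg q) hq.le (n := m - i)]
  have hnum : ‖∏ i ∈ range k, (1 - q ^ (m - i))‖ ≤ 2 ^ k :=
    calc ‖∏ i ∈ range k, (1 - q ^ (m - i))‖ = ∏ i ∈ range k, ‖1 - q ^ (m - i)‖ := norm_prod _ _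
      _ ≤ ∏ _i ∈ range k, 2 := prod_le_prod (fun _ _ => norm_nonneg _) fun i _ => hfactor i
      _ = 2 ^ k := by simp
  rw [gaussBinom_eq_prod_div hq, norm_div, div_pow]
  exact div_le_div₀ (by positivity) hnum (pow_pos (by linarith) k) (pow_le_norm_qPochhammer hq.le k)

theorem summable_pow_mul_sub_one_mul_pow {a : ℝ} (ha₀ : 0 ≤ a) (ha₁ : a < 1) (C : ℝ) :
    Summable fun k : ℕ => a ^ (k * (k - 1)) * C ^ k := by
  have hratio : Tendsto (fun k : ℕ => ‖C‖ * (a ^ 2) ^ k) atTop (𝓝 0) := by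
    simpa using (tendsto_pow_atTop_nhds_zero_of_lt_one (by positivity) (by nlinarith)).const_mul ‖C‖
  refine summable_of_ratio_norm_eventually_le (r := 1 / 2) (by norm_num) ?_
  filter_upwards [hratio.eventually_le_const (by norm_num : (0 : ℝ) < 1 / 2)] with k hk
  calc ‖a ^ ((k + 1) * (k + 1 - 1)) * C ^ (k + 1)‖
      = ‖C‖ * (a ^ 2) ^ k * ‖a ^ (k * (k - 1)) * C ^ k‖ := by
        simp only [add_one_mul_add_one_sub_one, norm_mul, norm_pow, Real.norm_of_nonneg ha₀]
        ring
    _ ≤ 1 / 2 * ‖a ^ (k * (k - 1)) * C ^ k‖ := by gcongr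

/-- Let `q, z ∈ ℂ` with `|q| < 1` and `r, s ∈ ℂ` with `r² = q`, `s² = z`. Then the
series `Σ_{k≥0} (-1)^k q^(k(k-1)) z^k / (q;q)_k` converges, and the determinants
of Lehmer's tridiagonal matrices `M(n)` converge to its sum as `n → ∞`. -/
theorem det_lehmerM_tendsto (q z r s : ℂ) (hq : ‖q‖ < 1)
    (hr : r ^ 2 = q) (hs : s ^ 2 = z) :
    Summable (fun k : ℕ => (-1 : ℂ) ^ k * q ^ (k * (k - 1)) * z ^ k / qPochhammer q k) ∧
    Tendsto (fun n : ℕ => (lehmerM r s n).det) atTop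
      (nhds (∑' k : ℕ, (-1 : ℂ) ^ k * q ^ (k * (k - 1)) * z ^ k / qPochhammer q k)) := by
  subst hr hs
  set term : ℕ → ℕ → ℂ := fun n k =>
    (-1) ^ k * (r ^ 2) ^ (k * (k - 1)) * (s ^ 2) ^ k * gaussBinom (r ^ 2) (n - k) k
  set bound : ℕ → ℝ := fun k => ‖r ^ 2‖ ^ (k * (k - 1)) * (‖s ^ 2‖ * (2 / (1 - ‖r ^ 2‖))) ^ k
  have hdet (n : ℕ) : (lehmerM r s n).det = ∑' k, term n k := by
    rw [det_lehmerM_eq_sum_antidiagonal, Nat.sum_antidiagonal_eq_sum_range_succ_mk, tsum_eq_sum]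
    intro k hk
    simp [term, gaussBinom_eq_zero_of_lt _ (by simp at hk; omega : n - k < k)]
  have hlim (k : ℕ) : Tendsto (term · k) atTop
      (𝓝 ((-1) ^ k * (r ^ 2) ^ (k * (k - 1)) * (s ^ 2) ^ k / qPochhammer (r ^ 2) k)) := by
    simpa [div_eq_mul_inv] using
      ((tendsto_gaussBinom_atTop hq k).comp (tendsto_sub_atTop_nat k)).const_mul
        ((-1) ^ k * (r ^ 2) ^ (k * (k - 1)) * (s ^ 2) ^ k)
  have hbound (n k : ℕ) : ‖term n k‖ ≤ bound k := by
    simp only [term, bound, norm_mul, norm_pow, norm_neg, norm_one, one_pow, one_mul, mul_pow,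
      mul_assoc]
    gcongr
    simpa only [norm_pow] using norm_gaussBinom_le hq (n - k) k
  have hsum : Summable bound := summable_pow_mul_sub_one_mul_pow (norm_nonneg _) hq _
  refine ⟨hsum.of_norm_bounded fun k => le_of_tendsto' (hlim k).norm fun n => hbound n k, ?_⟩
  simpa only [hdet] using tendsto_tsum_of_dominated_convergence hsum hlim (.of_forall hbound)
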